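/- Let Φ : M_n(ℂ) → M_m(ℂ) be a linear map. Then Φ is CPDNN (i.e., for every k ∈ ℕ, (id_k ⊗ Φ) maps doubly nonnegative matrices in M_{kn} to doubly nonnegative matrices in M_{km}) if and only if its Choi matrix J(Φ) = Σ_{i,j=1}^n E_{ij} ⊗ Φ(E_{ij}) is a doubly nonnegative nm×nm matrix. -/

import Mathlib

open Matrix
open scoped ComplexOrder

/-- A complex matrix is completely positive if it is a finite sum of rank-one
matrices `x xᵀ` with `x` a real entrywise nonnegative vector (viewed in `ℂ`). -/
def IsCPMat {ι : Type*} [Fintype ι] (A : Matrix ι ι ℂ) : Prop :=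
  ∃ (s : ℕ) (x : Fin s → ι → ℝ), (∀ t i, 0 ≤ x t i) ∧
    ∀ i j, A i j = ((∑ t, x t i * x t j : ℝ) : ℂ)

/-- A complex matrix is doubly nonnegative if it is positive semidefinite and
every entry is a nonnegative real number. -/
def IsDNNMat {ι : Type*} [Fintype ι] (A : Matrix ι ι ℂ) : Prop :=
  A.PosSemidef ∧ ∀ i j, 0 ≤ (A i j).re ∧ (A i j).im = 0

/-- The map `id_k ⊗ Φ` acting blockwise: the `((a,p),(b,q))` entry of the output
is `Φ(X_{ab})_{pq}`, where `X_{ab}` is the `(a,b)` block of `X`. -/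
def idTensor {n m : ℕ} (Φ : Matrix (Fin n) (Fin n) ℂ →ₗ[ℂ] Matrix (Fin m) (Fin m) ℂ)
    (k : ℕ) (X : Matrix (Fin k × Fin n) (Fin k × Fin n) ℂ) :
    Matrix (Fin k × Fin m) (Fin k × Fin m) ℂ :=
  Matrix.of fun ap bq => Φ (Matrix.of fun i j => X (ap.1, i) (bq.1, j)) ap.2 bq.2

/-- `Φ` is completely positive as a linear map between matrix algebras. -/
def IsCPMap {n m : ℕ} (Φ : Matrix (Fin n) (Fin n) ℂ →ₗ[ℂ] Matrix (Fin m) (Fin m) ℂ) : Prop :=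
  ∀ (k : ℕ) (X : Matrix (Fin k × Fin n) (Fin k × Fin n) ℂ),
    X.PosSemidef → (idTensor Φ k X).PosSemidef

/-- `Φ` is trace-preserving. -/
def IsTP {n m : ℕ} (Φ : Matrix (Fin n) (Fin n) ℂ →ₗ[ℂ] Matrix (Fin m) (Fin m) ℂ) : Prop :=
  ∀ X, (Φ X).trace = X.trace

/-- `Φ` is CPCP: `id_k ⊗ Φ` maps completely positive matrices to completely
positive matrices for every `k`. -/
def IsCPCP {n m : ℕ} (Φ : Matrix (Fin n) (Fin n) ℂ →ₗ[ℂ] Matrix (Fin m) (Fin m) ℂ) : Prop :=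
  ∀ (k : ℕ) (X : Matrix (Fin k × Fin n) (Fin k × Fin n) ℂ),
    IsCPMat X → IsCPMat (idTensor Φ k X)

/-- `Φ` is CPDNN: `id_k ⊗ Φ` maps doubly nonnegative matrices to doubly
nonnegative matrices for every `k`. -/
def IsCPDNN {n m : ℕ} (Φ : Matrix (Fin n) (Fin n) ℂ →ₗ[ℂ] Matrix (Fin m) (Fin m) ℂ) : Prop :=
  ∀ (k : ℕ) (X : Matrix (Fin k × Fin n) (Fin k × Fin n) ℂ),
    IsDNNMat X → IsDNNMat (idTensor Φ k X)

/-- The Choi matrix `J(Φ) = Σ_{i,j} E_{ij} ⊗ Φ(E_{ij})`, with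
`((i,p),(j,q))` entry equal to `Φ(E_{ij})_{pq}`. -/
def choi {n m : ℕ} (Φ : Matrix (Fin n) (Fin n) ℂ →ₗ[ℂ] Matrix (Fin m) (Fin m) ℂ) :
    Matrix (Fin n × Fin m) (Fin n × Fin m) ℂ :=
  Matrix.of fun ip jq => Φ (Matrix.single ip.1 jq.1 1) ip.2 jq.2
/-! The Choi matrix is `(id_n ⊗ Φ)(ωω*)` for the nonnegative vector `ω = Σᵢ eᵢ ⊗ eᵢ`, which gives
necessity. Conversely, `(id_k ⊗ Φ)(X)` is the compression `Lᴴ (X ⊗ J(Φ)) L` of a Kronecker product by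
a 0/1 matrix `L`, and both positive semidefiniteness and entrywise nonnegativity survive Kronecker
products and congruence by entrywise nonnegative matrices. -/

open scoped Kronecker

section DNN

variable {ι κ : Type*} [Fintype ι] [Fintype κ]

lemma isDNNMat_iff (A : Matrix ι ι ℂ) : IsDNNMat A ↔ A.PosSemidef ∧ ∀ i j, 0 ≤ A i j := by
  simp only [IsDNNMat, Complex.nonneg_iff, eq_comm (a := (0 : ℝ))]

lemma IsDNNMat.kronecker {A : Matrix ι ι ℂ} {B : Matrix κ κ ℂ} (hA : IsDNNMat A)
    (hB : IsDNNMat B) : IsDNNMat (A ⊗ₖ B) := by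
  rw [isDNNMat_iff] at *
  exact ⟨hA.1.kronecker hB.1, fun _ _ => mul_nonneg (hA.2 _ _) (hB.2 _ _)⟩

lemma IsDNNMat.conjTranspose_mul_mul_same {A : Matrix ι ι ℂ} (hA : IsDNNMat A)
    {L : Matrix ι κ ℂ} (hL : ∀ i j, 0 ≤ L i j) : IsDNNMat (Lᴴ * A * L) := by
  rw [isDNNMat_iff] at *
  refine ⟨hA.1.conjTranspose_mul_mul_same L, fun i j => ?_⟩
  simp only [mul_apply, conjTranspose_apply]
  exact Finset.sum_nonneg fun _ _ => mul_nonneg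
    (Finset.sum_nonneg fun _ _ => mul_nonneg (star_nonneg_iff.mpr (hL _ _)) (hA.2 _ _)) (hL _ _)

lemma isDNNMat_vecMulVec_self_star {v : ι → ℂ} (hv : ∀ i, 0 ≤ v i) :
    IsDNNMat (vecMulVec v (star v)) := by
  rw [isDNNMat_iff]
  exact ⟨posSemidef_vecMulVec_self_star v, fun i j =>
    mul_nonneg (hv i) (star_nonneg_iff.mpr (hv j))⟩

end DNN

section Choi

variable {n m : ℕ} (Φ : Matrix (Fin n) (Fin n) ℂ →ₗ[ℂ] Matrix (Fin m) (Fin m) ℂ)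

lemma apply_eq_sum_choi (M : Matrix (Fin n) (Fin n) ℂ) (p q : Fin m) :
    Φ M p q = ∑ i, ∑ j, M i j * choi Φ (i, p) (j, q) := by
  conv_lhs => rw [matrix_eq_sum_single M]
  simp only [map_sum, Matrix.sum_apply]
  refine Finset.sum_congr rfl fun i _ => Finset.sum_congr rfl fun j _ => ?_
  rw [show single i j (M i j) = M i j • single i j 1 by simp, map_smul]
  rfl

lemma idTensor_apply (k : ℕ) (X : Matrix (Fin k × Fin n) (Fin k × Fin n) ℂ)
    (a b : Fin k) (p q : Fin m) :
    idTensor Φ k X (a, p) (b, q) = ∑ i, ∑ j, X (a, i) (b, j) * choi Φ (i, p) (j, q) :=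
  apply_eq_sum_choi Φ _ p q

def maxEntangledVec (n : ℕ) : Fin n × Fin n → ℂ := fun ai => if ai.1 = ai.2 then 1 else 0

lemma maxEntangledVec_nonneg (n : ℕ) (ai : Fin n × Fin n) : 0 ≤ maxEntangledVec n ai := by
  unfold maxEntangledVec; split_ifs <;> simp

lemma idTensor_vecMulVec_maxEntangledVec :
    idTensor Φ n (vecMulVec (maxEntangledVec n) (star (maxEntangledVec n))) = choi Φ := by
  ext ⟨a, p⟩ ⟨b, q⟩
  simp [idTensor_apply, vecMulVec_apply, maxEntangledVec]

/-- `L = I_k ⊗ ω ⊗ I_m`; compressing by it contracts the two middle indices of `X ⊗ J(Φ)`. -/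
def linkMatrix (k n m : ℕ) : Matrix ((Fin k × Fin n) × (Fin n × Fin m)) (Fin k × Fin m) ℂ :=
  of fun x y => if x.1.1 = y.1 ∧ x.1.2 = x.2.1 ∧ x.2.2 = y.2 then 1 else 0

lemma linkMatrix_nonneg (k n m : ℕ) (x : (Fin k × Fin n) × (Fin n × Fin m))
    (y : Fin k × Fin m) : 0 ≤ linkMatrix k n m x y := by
  simp only [linkMatrix, of_apply]; split_ifs <;> simp

lemma idTensor_eq_linkMatrix_conj (k : ℕ) (X : Matrix (Fin k × Fin n) (Fin k × Fin n) ℂ) :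
    idTensor Φ k X = (linkMatrix k n m)ᴴ * (X ⊗ₖ choi Φ) * linkMatrix k n m := by
  ext ⟨a, p⟩ ⟨b, q⟩
  rw [idTensor_apply, Finset.sum_comm]
  simp [mul_apply, linkMatrix, Fintype.sum_prod_type, ite_and, apply_ite (starRingEnd ℂ)]

end Choi

/-- A linear map `Φ : Mₙ(ℂ) → Mₘ(ℂ)` is CPDNN if and only if its Choi matrix
is doubly nonnegative. -/
theorem stmt11 (n m : ℕ)
    (Φ : Matrix (Fin n) (Fin n) ℂ →ₗ[ℂ] Matrix (Fin m) (Fin m) ℂ) :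
    IsCPDNN Φ ↔ IsDNNMat (choi Φ) := by
  refine ⟨fun h => ?_, fun hC k X hX => ?_⟩
  · rw [← idTensor_vecMulVec_maxEntangledVec Φ]
    exact h n _ (isDNNMat_vecMulVec_self_star (maxEntangledVec_nonneg n))
  · rw [idTensor_eq_linkMatrix_conj]
    exact (hX.kronecker hC).conjTranspose_mul_mul_same (linkMatrix_nonneg k n m)
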